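/- There exists a real constant c ≠ 0, independent of k and l, such that for all k, l ∈ ℤ²₊ the vector field b(e_k¹, e_l¹) − b(e_l¹, e_k¹) − b(e_k⁰, e_l⁰) + b(e_l⁰, e_k⁰) equals a(k,l) · c · |k+l| · e¹_{k+l} modulo a gradient. (This is the fourth identity of the magnetic-direction Lie bracket lemma: Z_{k,l}^{1,1} − Z_{k,l}^{0,0} = a c |k+l| σ¹_{k+l}.) -/

import Mathlib

/-- Euclidean norm of an integer lattice vector `k ∈ ℤ²`. -/
noncomputable def knorm (k : ℤ × ℤ) : ℝ := Real.sqrt ((k.1 : ℝ) ^ 2 + (k.2 : ℝ) ^ 2)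

/-- The phase `k ⋅ x = k₁ x₁ + k₂ x₂`. -/
noncomputable def phase (k : ℤ × ℤ) (x : ℝ × ℝ) : ℝ := (k.1 : ℝ) * x.1 + (k.2 : ℝ) * x.2

/-- The divergence-free trigonometric vector field
`e_k⁰(x) = |k|⁻¹ (k₂, −k₁) cos(k ⋅ x)`. -/
noncomputable def e0 (k : ℤ × ℤ) (x : ℝ × ℝ) : ℝ × ℝ :=
  (((k.2 : ℝ) / knorm k) * Real.cos (phase k x),
   ((-(k.1 : ℝ)) / knorm k) * Real.cos (phase k x))

/-- The divergence-free trigonometric vector field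
`e_k¹(x) = |k|⁻¹ (−k₂, k₁) sin(k ⋅ x)`. -/
noncomputable def e1 (k : ℤ × ℤ) (x : ℝ × ℝ) : ℝ × ℝ :=
  (((-(k.2 : ℝ)) / knorm k) * Real.sin (phase k x),
   ((k.1 : ℝ) / knorm k) * Real.sin (phase k x))

/-- The advection operator `b(u,v) = (u ⋅ ∇)v`, i.e. the derivative of `v`
in the direction `u(x)`. -/
noncomputable def advect (u v : ℝ × ℝ → ℝ × ℝ) (x : ℝ × ℝ) : ℝ × ℝ :=
  fderiv ℝ v x (u x)

/-- The coefficient `a(k,l) = ⟨k, l^⊥⟩ / (|k| |l|)` with `l^⊥ = (−l₂, l₁)`. -/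
noncomputable def acoef (k l : ℤ × ℤ) : ℝ :=
  ((k.1 : ℝ) * (-(l.2 : ℝ)) + (k.2 : ℝ) * (l.1 : ℝ)) / (knorm k * knorm l)

/-- The half lattice `ℤ²₊ = {j ∈ ℤ² \ {0} : j₁ > 0, or j₁ = 0 and j₂ > 0}`. -/
def Zpos : Set (ℤ × ℤ) := {j | 0 < j.1 ∨ (j.1 = 0 ∧ 0 < j.2)}

/-- `F` equals `G` modulo a gradient: there exists a smooth `2π`-periodic
function `p : ℝ² → ℝ` with `F = G + ∇p`. -/
def EqModGrad (F G : ℝ × ℝ → ℝ × ℝ) : Prop :=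
  ∃ p : ℝ × ℝ → ℝ, ContDiff ℝ (⊤ : ℕ∞) p ∧
    (∀ x : ℝ × ℝ, p (x.1 + 2 * Real.pi, x.2) = p x ∧ p (x.1, x.2 + 2 * Real.pi) = p x) ∧
    ∀ x : ℝ × ℝ, F x = G x + (fderiv ℝ p x (1, 0), fderiv ℝ p x (0, 1))

noncomputable def phaseL (k : ℤ × ℤ) : (ℝ × ℝ) →L[ℝ] ℝ :=
  (k.1 : ℝ) • (ContinuousLinearMap.fst ℝ ℝ ℝ) + (k.2 : ℝ) • (ContinuousLinearMap.snd ℝ ℝ ℝ)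

lemma hasFDerivAt_phase (k : ℤ × ℤ) (x : ℝ × ℝ) : HasFDerivAt (phase k) (phaseL k) x := by
  have h : phase k = ⇑(phaseL k) := by
    funext y; simp [phase, phaseL]
  rw [h]; exact (phaseL k).hasFDerivAt

lemma hasFDerivAt_e1 (k : ℤ × ℤ) (x : ℝ × ℝ) :
    HasFDerivAt (e1 k)
      (((((-(k.2 : ℝ)) / knorm k) * Real.cos (phase k x)) • phaseL k).prod
       ((((k.1 : ℝ) / knorm k) * Real.cos (phase k x)) • phaseL k)) x := by
  have h1 : HasFDerivAt (fun y => ((-(k.2 : ℝ)) / knorm k) * Real.sin (phase k y))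
      ((((-(k.2 : ℝ)) / knorm k) * Real.cos (phase k x)) • phaseL k) x := by
    have := ((hasFDerivAt_phase k x).sin).const_mul ((-(k.2 : ℝ)) / knorm k)
    simpa [smul_smul] using this
  have h2 : HasFDerivAt (fun y => ((k.1 : ℝ) / knorm k) * Real.sin (phase k y))
      ((((k.1 : ℝ) / knorm k) * Real.cos (phase k x)) • phaseL k) x := by
    have := ((hasFDerivAt_phase k x).sin).const_mul ((k.1 : ℝ) / knorm k)
    simpa [smul_smul] using this
  exact h1.prodMk h2

lemma hasFDerivAt_e0 (k : ℤ × ℤ) (x : ℝ × ℝ) :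
    HasFDerivAt (e0 k)
      ((-((((k.2 : ℝ)) / knorm k * Real.sin (phase k x)) • phaseL k)).prod
       (-((((-(k.1 : ℝ)) / knorm k) * Real.sin (phase k x)) • phaseL k))) x := by
  have h1 : HasFDerivAt (fun y => ((k.2 : ℝ) / knorm k) * Real.cos (phase k y))
      (-((((k.2 : ℝ)) / knorm k * Real.sin (phase k x)) • phaseL k)) x := by
    have := ((hasFDerivAt_phase k x).cos).const_mul ((k.2 : ℝ) / knorm k)
    simpa [smul_smul, neg_smul, mul_comm, mul_left_comm, mul_assoc] using this
  have h2 : HasFDerivAt (fun y => ((-(k.1 : ℝ)) / knorm k) * Real.cos (phase k y))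
      (-((((-(k.1 : ℝ)) / knorm k) * Real.sin (phase k x)) • phaseL k)) x := by
    have := ((hasFDerivAt_phase k x).cos).const_mul ((-(k.1 : ℝ)) / knorm k)
    simpa [smul_smul, neg_smul, mul_comm, mul_left_comm, mul_assoc] using this
  exact h1.prodMk h2

lemma knorm_pos {k : ℤ × ℤ} (hk : k ∈ Zpos) : 0 < knorm k := by
  have h : (0:ℝ) < (k.1 : ℝ) ^ 2 + (k.2 : ℝ) ^ 2 := by
    rcases hk with h | ⟨h1, h2⟩
    · have : (0:ℝ) < (k.1:ℝ) := by exact_mod_cast h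
      positivity
    · have : (0:ℝ) < (k.2:ℝ) := by exact_mod_cast h2
      have h1' : (k.1 : ℝ) = 0 := by exact_mod_cast h1
      rw [h1']; positivity
  exact Real.sqrt_pos.mpr h

lemma Zpos_add {k l : ℤ × ℤ} (hk : k ∈ Zpos) (hl : l ∈ Zpos) : k + l ∈ Zpos := by
  rcases hk with h | ⟨h1, h2⟩ <;> rcases hl with h' | ⟨h1', h2'⟩ <;>
    simp only [Zpos, Set.mem_setOf_eq, Prod.fst_add, Prod.snd_add] <;> omega

theorem magnetic_lie_bracket_diff_minus :
    ∃ c : ℝ, c ≠ 0 ∧ ∀ k l : ℤ × ℤ, k ∈ Zpos → l ∈ Zpos →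
      EqModGrad
        (fun x => advect (e1 k) (e1 l) x - advect (e1 l) (e1 k) x - advect (e0 k) (e0 l) x + advect (e0 l) (e0 k) x)
        (fun x => (acoef k l * c * (knorm (k + l))) • e1 (k + l) x) := by
  refine ⟨-1, by norm_num, fun k l hk hl => ⟨fun _ => 0, contDiff_const, fun x => ⟨rfl, rfl⟩, fun x => ?_⟩⟩
  have hnk := (knorm_pos hk).ne'
  have hnl := (knorm_pos hl).ne'
  have hnm := (knorm_pos (Zpos_add hk hl)).ne'
  have hph : phase (k + l) x = phase k x + phase l x := by
    push_cast [phase, Prod.fst_add, Prod.snd_add]; ring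
  simp only [advect, (hasFDerivAt_e1 k x).fderiv, (hasFDerivAt_e1 l x).fderiv,
    (hasFDerivAt_e0 k x).fderiv, (hasFDerivAt_e0 l x).fderiv, fderiv_fun_const,
    Pi.zero_apply, ContinuousLinearMap.zero_apply]
  simp only [ContinuousLinearMap.prod_apply, ContinuousLinearMap.smul_apply, ContinuousLinearMap.neg_apply, phaseL,
    ContinuousLinearMap.add_apply, ContinuousLinearMap.coe_smul', Pi.smul_apply,
    ContinuousLinearMap.coe_fst', ContinuousLinearMap.coe_snd', smul_eq_mul,
    e1, e0, acoef, hph, Real.sin_add, Prod.fst_add, Prod.snd_add, Prod.mk_add_mk,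
    Prod.smul_mk, Prod.mk_sub_mk, Prod.mk.injEq, Int.cast_add]
  constructor <;> (field_simp; ring)
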